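/- arXiv:2411.07910 — 3 statements merged into one kernel-verified Lean document; each statement's English description precedes it below -/
import Mathlib

section
/- For each i ≥ 1 and each z ∈ X, there exists a basis B of the subspace (ker ∂_i)_z such that for every b ∈ B there is some z' ≤ z with (b, z') ∈ C^{i+1}. -/
open Finsupp

variable (k : Type) [Field k] (X : Type) [PartialOrder X] [Fintype X] [DecidableEq X]

/-- Ambient type in which the `i`-cycles live: `Amb 0 = X`,
`Amb (i+1) = (Amb i →₀ k) × X`. -/
def Amb : ℕ → Type
  | 0 => X
  | i + 1 => ((Amb i) →₀ k) × X

/-- The "vertex" (second coordinate) of an element of `Amb i`. -/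
def vtx : ∀ i : ℕ, Amb k X i → X
  | 0, a => a
  | _ + 1, p => p.2

/-- The ambient boundary map `∂_{i+1} : k C^{i+1} → k C^i`, defined on the whole
free module `Amb (i+1) →₀ k` by `(w, z) ↦ w`. -/
noncomputable def bd (i : ℕ) : (Amb k X (i + 1) →₀ k) →ₗ[k] (Amb k X i →₀ k) :=
  Finsupp.linearCombination k (fun p : Amb k X (i + 1) => p.1)

/-- `(ker ∂_{i+1})_z`: the subspace of elements of `ker ∂_{i+1}`, supported on `C^{i+1}`,
all of whose support elements have second coordinate `< z`. -/
noncomputable def Kz (C : ∀ i : ℕ, Set (Amb k X i)) (i : ℕ) (z : X) :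
    Submodule k (Amb k X (i + 1) →₀ k) :=
  LinearMap.ker (bd k X i) ⊓ Finsupp.supported k k (C (i + 1)) ⊓
    Finsupp.supported k k {p : Amb k X (i + 1) | vtx k X (i + 1) p < z}

/-- `(ker ∂_{i+1})_{z^-} = Σ_{z' ⋖ z} (ker ∂_{i+1})_{z'}`. -/
noncomputable def Kpred (C : ∀ i : ℕ, Set (Amb k X i)) (i : ℕ) (z : X) :
    Submodule k (Amb k X (i + 1) →₀ k) :=
  ⨆ z' ∈ {z' : X | z' ⋖ z}, Kz k X C i z'

/-- `B^{i+2}_z'`: the set of `w` with `(w, z) ∈ C^{i+2}`. -/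
def Bset (C : ∀ i : ℕ, Set (Amb k X i)) (i : ℕ) (z : X) : Set (Amb k X (i + 1) →₀ k) :=
  {w | (⟨w, z⟩ : Amb k X (i + 2)) ∈ C (i + 2)}

/-- The data of an admissible choice of `i`-cycles `C^i` for the poset `X` at the point `x`:
`C^0 = {x}`, `C^1 = {(x,y) : y ∈ x⁺}` and, recursively, for each `z` the set
`B^{i+2}_z' = {w | (w,z) ∈ C^{i+2}}` is a basis of a complement of `(ker ∂_{i+1})_{z⁻}`
inside `(ker ∂_{i+1})_z`. -/
structure CycleData (x : X) : Type 1 where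
  C : ∀ i : ℕ, Set (Amb k X i)
  hC0 : C 0 = {x}
  hC1 : C 1 = {p : Amb k X 1 | ∃ y : X, x ⋖ y ∧ p = ⟨Finsupp.single x 1, y⟩}
  indep : ∀ (i : ℕ) (z : X),
    LinearIndependent k (Subtype.val : Bset k X C i z → (Amb k X (i + 1) →₀ k))
  disj : ∀ (i : ℕ) (z : X),
    Submodule.span k (Bset k X C i z) ⊓ Kpred k X C i z = ⊥
  compl : ∀ (i : ℕ) (z : X),
    Submodule.span k (Bset k X C i z) ⊔ Kpred k X C i z = Kz k X C i z

/-!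
Unwinding `(ker ∂)_z = span B_z ⊕ (ker ∂)_{z⁻}` by well-founded induction on `z` shows that
`(ker ∂)_z` is spanned by the union of the `B_{z'}` with `z' ≤ z`; any basis extracted from
this spanning set has the required form.
-/

theorem biSup_le_eq_of_sup_biSup_covBy_eq {α ι : Type*} [CompleteLattice α] [PartialOrder ι]
    [WellFoundedLT ι] {K T : ι → α} (hK : Monotone K)
    (h : ∀ z, T z ⊔ ⨆ z' ∈ {z' : ι | z' ⋖ z}, K z' = K z) (z : ι) :
    ⨆ z' ≤ z, T z' = K z := by
  induction z using WellFoundedLT.induction with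
  | ind z IH =>
    apply le_antisymm
    · refine iSup₂_le fun z' hz' => ?_
      calc T z' ≤ K z' := (h z').le.trans' le_sup_left
        _ ≤ K z := hK hz'
    · rw [← h z]
      refine sup_le (le_iSup₂_of_le z le_rfl le_rfl) (iSup₂_le fun z' hz' => ?_)
      rw [← IH z' hz'.lt]
      exact iSup₂_le fun z'' hz'' => le_iSup₂_of_le z'' (hz''.trans hz'.le) le_rfl

theorem Kz_monotone {k : Type} [Field k] {X : Type} [PartialOrder X]
    (C : ∀ i : ℕ, Set (Amb k X i)) (i : ℕ) : Monotone (Kz k X C i) :=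
  fun _ _ h => inf_le_inf le_rfl (Finsupp.supported_mono fun _ hp => lt_of_lt_of_le hp h)

/-- For each `i ≥ 1` (here `i+1`, `i ≥ 0`) and each `z ∈ X`, there exists a
basis `B` of the subspace `(ker ∂_{i+1})_z` such that for every `b ∈ B` there is some `z' ≤ z`
with `(b, z') ∈ C^{i+2}`. -/
theorem stmt1 (x : X) (D : CycleData k X x) (i : ℕ) (z : X) :
    ∃ B : Set (Amb k X (i + 1) →₀ k),
      LinearIndependent k (Subtype.val : B → (Amb k X (i + 1) →₀ k)) ∧
      Submodule.span k B = Kz k X D.C i z ∧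
      ∀ b ∈ B, ∃ z' : X, z' ≤ z ∧ (⟨b, z'⟩ : Amb k X (i + 2)) ∈ D.C (i + 2) := by
  obtain ⟨B, hB_sub, hB_span, hB_indep⟩ :=
    exists_linearIndependent k (⋃ z' ≤ z, Bset k X D.C i z')
  have h_span_union : Submodule.span k (⋃ z' ≤ z, Bset k X D.C i z') = Kz k X D.C i z := by
    rw [Submodule.span_iUnion₂]
    exact biSup_le_eq_of_sup_biSup_covBy_eq (Kz_monotone D.C i) (D.compl i) z
  refine ⟨B, hB_indep, hB_span.trans h_span_union, fun b hb => ?_⟩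
  obtain ⟨z', hz', hb'⟩ := Set.mem_iUnion₂.mp (hB_sub hb)
  exact ⟨z', hz', hb'⟩
end

section
/- For every i ≥ 1, there is a well-defined homomorphism of right Λ-modules d_i : kC^i ⊗_{Λ_0} Λ → kC^{i-1} ⊗_{Λ_0} Λ satisfying d_i((w,z) ⊗ 1) = w ⊗ q_z for every (w,z) ∈ C^i. -/
set_option maxRecDepth 16000
set_option linter.unusedSectionVars false
set_option maxHeartbeats 1000000

open Finsupp

variable (k : Type) [Field k] (X : Type) [PartialOrder X] [Fintype X] [DecidableEq X]

variable [DecidableRel (α := X) (· ≤ ·)]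

instance : DecidableRel (α := X) (· < ·) := fun a b =>
  decidable_of_iff (a ≤ b ∧ ¬ b ≤ a) lt_iff_le_not_ge.symm

instance : LocallyFiniteOrder X := Fintype.toLocallyFiniteOrder

/-- The incidence algebra `Λ = kQ/I` of the poset `X`: functions on the pairs `a ≤ b`,
`c_{a,b}` corresponding to the characteristic function of `(a,b)`. -/
abbrev Lam := IncidenceAlgebra k X

/-- `Λ₀`, the (commutative, semisimple) subalgebra of `Λ` spanned by the stationary paths
`c_a`, identified with `k^X`. -/
abbrev Lam0 := X → k

/-- The path `c_{a,b}` for `a ≤ b` (and junk value `0` if `a ≰ b`). -/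
def cpath (a b : X) : Lam k X :=
  ⟨fun a' b' => if a' = a ∧ b' = b ∧ a ≤ b then 1 else 0, by
    intro a' b' h
    simp only [ite_eq_right_iff, one_ne_zero]
    rintro ⟨rfl, rfl, hab⟩
    exact (h hab).elim⟩

/-- The stationary path `c_a = c_{a,a}`. -/
def statp (a : X) : Lam k X := cpath k X a a

/-- The embedding of `Λ₀ = k^X` into `Λ` as the span of the stationary paths. -/
def diagHom : Lam0 k X →+* Lam k X where
  toFun f := ⟨fun a b => if a = b then f a else 0, by
    intro a b h
    simp only [ite_eq_right_iff]
    rintro rfl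
    exact (h le_rfl).elim⟩
  map_one' := by
    ext a b _
    simp [IncidenceAlgebra.one_apply]
  map_mul' f g := by
    ext a b hab
    rcases eq_or_ne a b with rfl | hne
    · simp [IncidenceAlgebra.mul_apply]
    · simp only [IncidenceAlgebra.coe_mk, IncidenceAlgebra.mul_apply, if_neg hne]
      rw [Finset.sum_eq_zero]
      intro x hx
      rcases eq_or_ne a x with rfl | hax
      · rw [if_neg hne]; ring
      · rw [if_neg hax]; ring
  map_zero' := by ext a b _; simp
  map_add' f g := by
    ext a b hab
    rcases eq_or_ne a b with rfl | hne
    · simp [IncidenceAlgebra.add_apply]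
    · simp [IncidenceAlgebra.add_apply, if_neg hne]

/-- `Λ` is a `Λ₀`-module via left multiplication through `diagHom`. -/
noncomputable instance : Module (Lam0 k X) (Lam k X) := Module.compHom _ (diagHom k X)

/-- The endomorphism of the free module `Amb i →₀ k` given by `f ∈ Λ₀ = k^X`, where `c_a`
acts on a basis element `p` by `δ_{vtx p, a}`. -/
noncomputable def phiAmbFun (i : ℕ) (f : Lam0 k X) :
    (Amb k X i →₀ k) →ₗ[k] (Amb k X i →₀ k) :=
  Finsupp.lsum k fun p => f (vtx k X i p) • Finsupp.lsingle p

theorem phiAmbFun_single (i : ℕ) (f : Lam0 k X) (p : Amb k X i) (c : k) :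
    phiAmbFun k X i f (Finsupp.single p c) = f (vtx k X i p) • Finsupp.single p c := by
  rw [phiAmbFun, Finsupp.lsum_single, LinearMap.smul_apply, Finsupp.lsingle_apply]

/-- The action of `Λ₀` on the free module `Amb i →₀ k` as a ring homomorphism to
endomorphisms. -/
noncomputable def phiAmb (i : ℕ) : Lam0 k X →+* Module.End k (Amb k X i →₀ k) where
  toFun f := phiAmbFun k X i f
  map_one' := by
    apply Finsupp.lhom_ext
    intro p c
    rw [phiAmbFun_single, Module.End.one_apply, Pi.one_apply, one_smul]
  map_mul' f g := by
    apply Finsupp.lhom_ext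
    intro p c
    show phiAmbFun k X i (f * g) (Finsupp.single p c) =
      (phiAmbFun k X i f * phiAmbFun k X i g) (Finsupp.single p c)
    rw [Module.End.mul_apply, phiAmbFun_single, phiAmbFun_single, map_smul,
      phiAmbFun_single, smul_smul, Pi.mul_apply, mul_comm]
  map_zero' := by
    apply Finsupp.lhom_ext
    intro p c
    rw [phiAmbFun_single, Pi.zero_apply, zero_smul, LinearMap.zero_apply]
  map_add' f g := by
    apply Finsupp.lhom_ext
    intro p c
    rw [phiAmbFun_single, LinearMap.add_apply, phiAmbFun_single, phiAmbFun_single,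
      Pi.add_apply, add_smul]

theorem phiAmb_apply (i : ℕ) (f : Lam0 k X) (g : Amb k X i →₀ k) (q : Amb k X i) :
    phiAmb k X i f g q = f (vtx k X i q) * g q := by
  induction g using Finsupp.induction_linear with
  | zero => simp
  | add a b ha hb => simp [ha, hb, mul_add]
  | single p c =>
    show phiAmbFun k X i f (Finsupp.single p c) q = _
    rw [phiAmbFun_single]
    rcases eq_or_ne p q with rfl | hpq
    · simp [Finsupp.single_apply]
    · classical
      rw [Finsupp.smul_apply, Finsupp.single_apply, if_neg hpq, smul_zero, mul_zero]

theorem phiAmb_mem_supported (i : ℕ) (f : Lam0 k X) (s : Set (Amb k X i))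
    (g : Amb k X i →₀ k) (hg : g ∈ Finsupp.supported k k s) :
    phiAmb k X i f g ∈ Finsupp.supported k k s := by
  rw [Finsupp.mem_supported'] at hg ⊢
  intro p hp
  rw [phiAmb_apply, hg p hp, mul_zero]

/-- The action of `Λ₀` on `kC^i` (the span of the `i`-cycles). -/
noncomputable def phiKC (C : ∀ i : ℕ, Set (Amb k X i)) (i : ℕ) :
    Lam0 k X →+* Module.End k ↥(Finsupp.supported k k (C i)) where
  toFun f := (phiAmb k X i f).restrict
    (fun g hg => phiAmb_mem_supported k X i f (C i) g hg)
  map_one' := by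
    apply LinearMap.ext
    rintro ⟨g, hg⟩
    apply Subtype.ext
    simp [LinearMap.restrict_apply]
  map_mul' f g := by
    apply LinearMap.ext
    rintro ⟨h, hh⟩
    apply Subtype.ext
    simp [LinearMap.restrict_apply]
  map_zero' := by
    apply LinearMap.ext
    rintro ⟨g, hg⟩
    apply Subtype.ext
    simp [LinearMap.restrict_apply]
  map_add' f g := by
    apply LinearMap.ext
    rintro ⟨h, hh⟩
    apply Subtype.ext
    simp [LinearMap.restrict_apply]

/-- `kC^i` as a `Λ₀`-module. -/
noncomputable instance (C : ∀ i : ℕ, Set (Amb k X i)) (i : ℕ) :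
    Module (Lam0 k X) ↥(Finsupp.supported k k (C i)) :=
  Module.compHom _ (phiKC k X C i)

open scoped TensorProduct

/-- Right multiplication by `a ∈ Λ` as a `Λ₀`-linear endomorphism of `Λ`. -/
noncomputable def rmulL (a : Lam k X) : Lam k X →ₗ[Lam0 k X] Lam k X where
  toFun b := b * a
  map_add' b c := add_mul b c a
  map_smul' f b := by
    show (diagHom k X f * b) * a = diagHom k X f * (b * a)
    rw [mul_assoc]

/-- The right `Λ`-module structure (i.e. left `Λᵐᵒᵖ`-module structure) on `M ⊗_{Λ₀} Λ`,
`Λ` being a `Λ₀`-`Λ`-bimodule via right multiplication. -/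
noncomputable instance modOpTensor (M : Type) [AddCommGroup M] [Module (Lam0 k X) M] :
    Module (Lam k X)ᵐᵒᵖ (M ⊗[Lam0 k X] Lam k X) where
  smul a t := LinearMap.lTensor M (rmulL k X a.unop) t
  one_smul t := by
    show LinearMap.lTensor M (rmulL k X (1 : (Lam k X)ᵐᵒᵖ).unop) t = t
    have : rmulL k X ((1 : (Lam k X)ᵐᵒᵖ).unop) = LinearMap.id := by
      apply LinearMap.ext; intro b
      show b * 1 = b
      rw [mul_one]
    rw [this, LinearMap.lTensor_id, LinearMap.id_apply]
  mul_smul a b t := by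
    show LinearMap.lTensor M (rmulL k X (a * b).unop) t =
      LinearMap.lTensor M (rmulL k X a.unop) (LinearMap.lTensor M (rmulL k X b.unop) t)
    have : rmulL k X ((a * b).unop) = (rmulL k X a.unop).comp (rmulL k X b.unop) := by
      apply LinearMap.ext; intro c
      show c * (b.unop * a.unop) = (c * b.unop) * a.unop
      rw [mul_assoc]
    rw [this, LinearMap.lTensor_comp, LinearMap.comp_apply]
  smul_zero a := map_zero _
  smul_add a s t := map_add _ s t
  add_smul a b t := by
    show LinearMap.lTensor M (rmulL k X (a + b).unop) t =
      LinearMap.lTensor M (rmulL k X a.unop) t + LinearMap.lTensor M (rmulL k X b.unop) t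
    have : rmulL k X ((a + b).unop) = rmulL k X a.unop + rmulL k X b.unop := by
      apply LinearMap.ext; intro c
      show c * (a.unop + b.unop) = c * a.unop + c * b.unop
      rw [mul_add]
    rw [this, LinearMap.lTensor_add, LinearMap.add_apply]
  zero_smul t := by
    show LinearMap.lTensor M (rmulL k X (0 : (Lam k X)ᵐᵒᵖ).unop) t = 0
    have : rmulL k X ((0 : (Lam k X)ᵐᵒᵖ).unop) = 0 := by
      apply LinearMap.ext; intro c
      show c * 0 = 0
      rw [mul_zero]
    rw [this, LinearMap.lTensor_zero, LinearMap.zero_apply]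

theorem opSmul_tmul (M : Type) [AddCommGroup M] [Module (Lam0 k X) M]
    (a : Lam k X) (m : M) (b : Lam k X) :
    (MulOpposite.op a) • (m ⊗ₜ[Lam0 k X] b) = m ⊗ₜ[Lam0 k X] (b * a) := rfl

/-- The sum `q_z = Σ_{u ≤ z} c_{u,z}` of the paths ending at `z`. -/
noncomputable def qel (z : X) : Lam k X :=
  ∑ u ∈ Finset.univ.filter (· ≤ z), cpath k X u z

/-- `kC^i ⊗_{Λ₀} Λ`, the `i`-th term of the projective resolution, a right `Λ`-module. -/
noncomputable def TCmod (C : ∀ i : ℕ, Set (Amb k X i)) (i : ℕ) : Type :=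
  ↥(Finsupp.supported k k (C i)) ⊗[Lam0 k X] Lam k X

noncomputable instance (C : ∀ i : ℕ, Set (Amb k X i)) (i : ℕ) : AddCommGroup (TCmod k X C i) :=
  (TensorProduct.addCommGroup (R := Lam0 k X) (M := ↥(Finsupp.supported k k (C i))) (N := Lam k X) :)

noncomputable instance (C : ∀ i : ℕ, Set (Amb k X i)) (i : ℕ) :
    Module (Lam k X)ᵐᵒᵖ (TCmod k X C i) :=
  (modOpTensor k X ↥(Finsupp.supported k k (C i)) :)

/-- The basis element of `kC^i` given by `p ∈ C^i`. -/
noncomputable def bas (C : ∀ i : ℕ, Set (Amb k X i)) (i : ℕ) (p : Amb k X i)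
    (hp : p ∈ C i) : ↥(Finsupp.supported k k (C i)) :=
  ⟨Finsupp.single p 1, Finsupp.single_mem_supported k 1 hp⟩

/-- The generator `(w,z) ⊗ 1` of `kC^i ⊗_{Λ₀} Λ` given by `(w,z) ∈ C^i`. -/
noncomputable def gen (C : ∀ i : ℕ, Set (Amb k X i)) (i : ℕ) (p : Amb k X i)
    (hp : p ∈ C i) : TCmod k X C i :=
  bas k X C i p hp ⊗ₜ[Lam0 k X] 1

/-- Evaluation of an element of `Λ` at the stationary pair `(z,z)`, a ring homomorphism. -/
noncomputable def evalHom (z : X) : Lam k X →+* k where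
  toFun f := f z z
  map_one' := by simp
  map_mul' f g := by
    show (f * g) z z = f z z * g z z
    rw [IncidenceAlgebra.mul_apply, Finset.Icc_self, Finset.sum_singleton]
  map_zero' := rfl
  map_add' f g := rfl

/-- The simple right `Λ`-module `S_z` at the vertex `z`: a copy of `k` on which `λ ∈ Λ`
acts by multiplication by `λ(z,z)`. -/
def SMod (_z : X) : Type := k

noncomputable instance (z : X) : AddCommGroup (SMod k X z) := inferInstanceAs (AddCommGroup k)
noncomputable instance (z : X) : Module k (SMod k X z) := inferInstanceAs (Module k k)
instance (z : X) : One (SMod k X z) := ⟨(1 : k)⟩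

/-- The right `Λ`-module structure on `S_z`. -/
noncomputable instance (z : X) : Module (Lam k X)ᵐᵒᵖ (SMod k X z) :=
  Module.compHom k ((evalHom k X z).fromOpposite (fun a b => mul_comm _ _))

/-- The right `Λ₀`-module structure on `S_z` (the restriction of the `Λ`-action). -/
noncomputable instance (z : X) : Module (Lam0 k X) (SMod k X z) :=
  Module.compHom k (Pi.evalRingHom (fun _ : X => k) z)

instance (z : X) : SMulCommClass (Lam k X)ᵐᵒᵖ k (SMod k X z) where
  smul_comm a c m := mul_left_comm (evalHom k X z (MulOpposite.unop a)) c m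

instance (z : X) : SMulCommClass k (Lam k X)ᵐᵒᵖ (SMod k X z) where
  smul_comm c a m := (mul_left_comm (evalHom k X z (MulOpposite.unop a)) c m).symm

/-- The indecomposable projective right `Λ`-module `P_z = c_z Λ`. -/
noncomputable def PMod (z : X) : Submodule (Lam k X)ᵐᵒᵖ (Lam k X) :=
  Submodule.span (Lam k X)ᵐᵒᵖ {statp k X z}

/-- The radical `M · J(Λ)` of a right `Λ`-module `M`, where `J(Λ)` is the Jacobson radical. -/
noncomputable def radMod (M : Type) [AddCommGroup M] [Module (Lam k X)ᵐᵒᵖ M] :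
    Submodule (Lam k X)ᵐᵒᵖ M :=
  Submodule.span (Lam k X)ᵐᵒᵖ
    {m | ∃ a ∈ Ideal.jacobson (⊥ : Ideal (Lam k X)ᵐᵒᵖ), ∃ n : M, m = a • n}

/-- `|B^i_b|`: the number of `i`-cycles with second coordinate `b`. -/
noncomputable def Bcard (C : ∀ i : ℕ, Set (Amb k X i)) (i : ℕ) (b : X) : ℕ :=
  Set.ncard {p : Amb k X i | p ∈ C i ∧ vtx k X i p = b}

/-- The predicate singling out the differentials `d_{i+1} : kC^{i+1} ⊗_{Λ₀} Λ → kC^i ⊗_{Λ₀} Λ`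
of the resolution: `d ((w,z) ⊗ 1) = w ⊗ q_z` for `(w,z) ∈ C^{i+1}`. (These properties determine
the maps `d` uniquely.) -/
def IsDiff {x : X} (D : CycleData k X x)
    (d : ∀ i : ℕ, TCmod k X D.C (i + 1) →ₗ[(Lam k X)ᵐᵒᵖ] TCmod k X D.C i) : Prop :=
  ∀ (i : ℕ) (p : Amb k X (i + 1)) (hp : p ∈ D.C (i + 1))
    (w : ↥(Finsupp.supported k k (D.C i))) (_hw : (w : Amb k X i →₀ k) = p.1),
    d i (gen k X D.C (i + 1) p hp) = w ⊗ₜ[Lam0 k X] qel k X (vtx k X (i + 1) p)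

theorem mem_supported_fst (x : X) (D : CycleData k X x) (i : ℕ) (p : Amb k X (i + 1))
    (hp : p ∈ D.C (i + 1)) : (p.1 : Amb k X i →₀ k) ∈ Finsupp.supported k k (D.C i) := by
  cases i with
  | zero =>
    rw [D.hC1] at hp
    obtain ⟨y, _, hpe⟩ := hp
    have h1 : p.1 = Finsupp.single x 1 := by rw [hpe]; rfl
    rw [h1]
    exact Finsupp.single_mem_supported k 1 (by rw [D.hC0]; rfl)
  | succ j =>
    have hmem : p.1 ∈ Bset k X D.C j p.2 := hp
    have h2 : Submodule.span k (Bset k X D.C j p.2) ≤ Kz k X D.C j p.2 := by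
      rw [← D.compl j p.2]; exact le_sup_left
    exact (h2 (Submodule.subset_span hmem)).1.2

/-- Evaluation at a pair, as an additive homomorphism. -/
noncomputable def evalAt (u v : X) : Lam k X →+ k where
  toFun f := f u v
  map_zero' := rfl
  map_add' _ _ := rfl

theorem diagHom_apply (c : Lam0 k X) (a b : X) :
    diagHom k X c a b = if a = b then c a else 0 := rfl

theorem qel_apply_ne (z u v : X) (hv : v ≠ z) : qel k X z u v = 0 := by
  have : evalAt k X u v (qel k X z) = 0 := by
    rw [qel, map_sum]
    apply Finset.sum_eq_zero
    intro u' _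
    show cpath k X u' z u v = 0
    show (if u = u' ∧ v = z ∧ u' ≤ z then (1 : k) else 0) = 0
    rw [if_neg]
    tauto
  exact this

theorem qel_mul_diag (z : X) (c : Lam0 k X) :
    qel k X z * diagHom k X c = diagHom k X (fun _ => c z) * qel k X z := by
  ext u v hab
  rw [IncidenceAlgebra.mul_apply, IncidenceAlgebra.mul_apply]
  have hL : ∑ t ∈ Finset.Icc u v, qel k X z u t * diagHom k X c t v
      = qel k X z u v * c v := by
    rw [Finset.sum_eq_single_of_mem v (Finset.mem_Icc.2 ⟨hab, le_rfl⟩)]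
    · rw [diagHom_apply, if_pos rfl]
    · intro t _ ht
      rw [diagHom_apply, if_neg ht, mul_zero]
  have hR : ∑ t ∈ Finset.Icc u v, diagHom k X (fun _ => c z) u t * qel k X z t v
      = c z * qel k X z u v := by
    rw [Finset.sum_eq_single_of_mem u (Finset.mem_Icc.2 ⟨le_rfl, hab⟩)]
    · rw [diagHom_apply, if_pos rfl]
    · intro t _ ht
      rw [diagHom_apply, if_neg (Ne.symm ht), zero_mul]
  rw [hL, hR]
  rcases eq_or_ne v z with rfl | hv
  · rw [mul_comm]
  · rw [qel_apply_ne k X z u v hv, zero_mul, mul_zero]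

theorem lam0_smul_lam (c : Lam0 k X) (n : Lam k X) : c • n = diagHom k X c * n := rfl

theorem const_smul_supported (C : ∀ i : ℕ, Set (Amb k X i)) (i : ℕ) (a : k)
    (m : ↥(Finsupp.supported k k (C i))) :
    ((fun _ => a : Lam0 k X) • m) = a • m := by
  apply Subtype.ext
  have h1 : (((fun _ => a : Lam0 k X) • m : ↥(Finsupp.supported k k (C i))) :
      Amb k X i →₀ k) = phiAmb k X i (fun _ => a) m.val := rfl
  rw [h1]
  ext q
  rw [phiAmb_apply]
  simp

open scoped Classical

/-- The coefficient-wise building block of the map `d`. -/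
noncomputable def GFun (x : X) (D : CycleData k X x) (i : ℕ) (p : Amb k X (i + 1)) :
    k →+ TCmod k X D.C i :=
  if h : p ∈ D.C (i + 1) then
    { toFun := fun c =>
        (c • (⟨p.1, mem_supported_fst k X x D i p h⟩ : ↥(Finsupp.supported k k (D.C i))))
          ⊗ₜ[Lam0 k X] qel k X (vtx k X (i + 1) p)
      map_zero' := by simp only [zero_smul, TensorProduct.zero_tmul]; rfl
      map_add' := fun c c' => by simp only [add_smul, TensorProduct.add_tmul]; rfl }
  else 0

theorem GFun_pos (x : X) (D : CycleData k X x) (i : ℕ) (p : Amb k X (i + 1))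
    (h : p ∈ D.C (i + 1)) (c : k) :
    GFun k X x D i p c =
      (c • (⟨p.1, mem_supported_fst k X x D i p h⟩ : ↥(Finsupp.supported k k (D.C i))))
        ⊗ₜ[Lam0 k X] qel k X (vtx k X (i + 1) p) := by
  unfold GFun
  rw [dif_pos h]
  rfl

theorem GFun_neg (x : X) (D : CycleData k X x) (i : ℕ) (p : Amb k X (i + 1))
    (h : p ∉ D.C (i + 1)) (c : k) : GFun k X x D i p c = 0 := by
  unfold GFun
  rw [dif_neg h]
  rfl

/-- The `k`-additive map `kC^{i+1} → kC^i ⊗ Λ`, `(w,z) ↦ w ⊗ q_z`. -/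
noncomputable def Gmap (x : X) (D : CycleData k X x) (i : ℕ) :
    (Amb k X (i + 1) →₀ k) →+ TCmod k X D.C i :=
  Finsupp.liftAddHom (GFun k X x D i)

theorem Gmap_single (x : X) (D : CycleData k X x) (i : ℕ) (p : Amb k X (i + 1)) (c : k) :
    Gmap k X x D i (Finsupp.single p c) = GFun k X x D i p c :=
  Finsupp.liftAddHom_apply_single _ _ _

theorem Gmap_phi (x : X) (D : CycleData k X x) (i : ℕ) (r : Lam0 k X)
    (g : Amb k X (i + 1) →₀ k) (a : Lam k X) :
    MulOpposite.op a • Gmap k X x D i (phiAmb k X (i + 1) r g) =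
      MulOpposite.op (diagHom k X r * a) • Gmap k X x D i g := by
  induction g using Finsupp.induction_linear with
  | zero => rw [map_zero, map_zero, smul_zero, smul_zero]
  | add f g hf hg => rw [map_add, map_add, map_add, smul_add, smul_add, hf, hg]
  | single p c =>
    have h1 : phiAmb k X (i + 1) r (Finsupp.single p c)
        = Finsupp.single p (r (vtx k X (i + 1) p) * c) := by
      show phiAmbFun k X (i + 1) r (Finsupp.single p c) = _
      rw [phiAmbFun_single, Finsupp.smul_single, smul_eq_mul]
    rw [h1, Gmap_single, Gmap_single]
    by_cases h : p ∈ D.C (i + 1)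
    · rw [GFun_pos k X x D i p h, GFun_pos k X x D i p h]
      erw [opSmul_tmul, opSmul_tmul]
      have h2 : qel k X (vtx k X (i + 1) p) * (diagHom k X r * a)
          = ((fun _ => r (vtx k X (i + 1) p) : Lam0 k X) •
              (qel k X (vtx k X (i + 1) p) * a)) := by
        calc qel k X (vtx k X (i + 1) p) * (diagHom k X r * a)
            = (qel k X (vtx k X (i + 1) p) * diagHom k X r) * a := (mul_assoc _ _ _).symm
          _ = (diagHom k X (fun _ => r (vtx k X (i + 1) p)) * qel k X (vtx k X (i + 1) p)) * a := by
              rw [qel_mul_diag]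
          _ = ((fun _ => r (vtx k X (i + 1) p) : Lam0 k X) •
              (qel k X (vtx k X (i + 1) p) * a)) := by rw [lam0_smul_lam, mul_assoc]
      rw [h2, TensorProduct.tmul_smul, TensorProduct.smul_tmul', const_smul_supported,
        smul_smul]
    · rw [GFun_neg k X x D i p h, GFun_neg k X x D i p h, smul_zero, smul_zero]

/-- The balanced biadditive map inducing `d`. -/
noncomputable def PhiMap (x : X) (D : CycleData k X x) (i : ℕ) :
    ↥(Finsupp.supported k k (D.C (i + 1))) →+ (Lam k X →+ TCmod k X D.C i) where
  toFun m :=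
    { toFun := fun a => MulOpposite.op a • Gmap k X x D i m.val
      map_zero' := by
        show MulOpposite.op (0 : Lam k X) • Gmap k X x D i m.val = 0
        rw [MulOpposite.op_zero, zero_smul]
      map_add' := fun a b => by
        show MulOpposite.op (a + b) • Gmap k X x D i m.val = _
        rw [MulOpposite.op_add, add_smul] }
  map_zero' := by
    apply AddMonoidHom.ext
    intro a
    show MulOpposite.op a • Gmap k X x D i
        ((0 : ↥(Finsupp.supported k k (D.C (i + 1)))) : Amb k X (i + 1) →₀ k) = 0
    rw [ZeroMemClass.coe_zero, map_zero, smul_zero]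
  map_add' m m' := by
    apply AddMonoidHom.ext
    intro a
    show MulOpposite.op a • Gmap k X x D i
        (((m + m') : ↥(Finsupp.supported k k (D.C (i + 1)))) : Amb k X (i + 1) →₀ k)
      = MulOpposite.op a • Gmap k X x D i (m : Amb k X (i + 1) →₀ k)
        + MulOpposite.op a • Gmap k X x D i (m' : Amb k X (i + 1) →₀ k)
    rw [Submodule.coe_add, map_add, smul_add]

theorem PhiMap_balanced (x : X) (D : CycleData k X x) (i : ℕ) (r : Lam0 k X)
    (m : ↥(Finsupp.supported k k (D.C (i + 1)))) (a : Lam k X) :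
    PhiMap k X x D i (r • m) a = PhiMap k X x D i m (r • a) := by
  show MulOpposite.op a • Gmap k X x D i
      ((r • m : ↥(Finsupp.supported k k (D.C (i + 1)))) : Amb k X (i + 1) →₀ k)
    = MulOpposite.op (r • a) • Gmap k X x D i (m : Amb k X (i + 1) →₀ k)
  have hval : ((r • m : ↥(Finsupp.supported k k (D.C (i + 1)))) : Amb k X (i + 1) →₀ k)
      = phiAmb k X (i + 1) r (m : Amb k X (i + 1) →₀ k) := rfl
  rw [hval, Gmap_phi]
  rfl

/-- For every `i ≥ 1` there is a well-defined homomorphism of right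
`Λ`-modules `d_i : kC^i ⊗_{Λ₀} Λ → kC^{i-1} ⊗_{Λ₀} Λ` with `d_i ((w,z) ⊗ 1) = w ⊗ q_z`
for every `(w,z) ∈ C^i`. -/
theorem stmt2 (x : X) (D : CycleData k X x) (i : ℕ) :
    ∃ d : TCmod k X D.C (i + 1) →ₗ[(Lam k X)ᵐᵒᵖ] TCmod k X D.C i,
      ∀ (p : Amb k X (i + 1)) (hp : p ∈ D.C (i + 1))
        (w : ↥(Finsupp.supported k k (D.C i))) (_hw : (w : Amb k X i →₀ k) = p.1),
        d (gen k X D.C (i + 1) p hp) = w ⊗ₜ[Lam0 k X] qel k X (vtx k X (i + 1) p) := by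
  classical
  set d0 : TCmod k X D.C (i + 1) →+ TCmod k X D.C i :=
    TensorProduct.liftAddHom (PhiMap k X x D i) (PhiMap_balanced k X x D i) with hd0
  refine ⟨{ toFun := d0, map_add' := fun s t => d0.map_add s t, map_smul' := ?_ }, ?_⟩
  · intro aop t
    show d0 (aop • t) = aop • d0 t
    induction t using TensorProduct.induction_on with
    | zero => erw [smul_zero, map_zero, smul_zero]
    | tmul m n =>
      erw [← MulOpposite.op_unop aop, opSmul_tmul]
      have e1 : d0 (m ⊗ₜ[Lam0 k X] (n * aop.unop))
          = MulOpposite.op (n * aop.unop) • Gmap k X x D i (m : Amb k X (i + 1) →₀ k) := rfl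
      have e2 : d0 (m ⊗ₜ[Lam0 k X] n)
          = MulOpposite.op n • Gmap k X x D i (m : Amb k X (i + 1) →₀ k) := rfl
      rw [e1, e2, MulOpposite.op_mul, mul_smul]
    | add s t hs ht => erw [smul_add, map_add, map_add, smul_add, hs, ht]
  · intro p hp w hw
    show d0 (gen k X D.C (i + 1) p hp) = w ⊗ₜ[Lam0 k X] qel k X (vtx k X (i + 1) p)
    have e : d0 (gen k X D.C (i + 1) p hp)
        = MulOpposite.op (1 : Lam k X) •
            Gmap k X x D i ((bas k X D.C (i + 1) p hp : Amb k X (i + 1) →₀ k)) := rfl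
    rw [e, MulOpposite.op_one, one_smul]
    have e2 : ((bas k X D.C (i + 1) p hp : Amb k X (i + 1) →₀ k)) = Finsupp.single p 1 := rfl
    rw [e2, Gmap_single, GFun_pos k X x D i p hp, one_smul]
    congr 1
    exact Subtype.ext hw.symm
end

section
/- There exists a finite poset X and a choice of x ∈ X for which the chain complex ⋯ → kC^2 →(∂_2) kC^1 →(∂_1) kC^0 is not exact: for the 7-element poset X = {1,2,3,4,5,6,7} with covering relations 1<2, 1<3, 2<4, 2<5, 2<6, 3<4, 3<5, 3<6, 4<7, 5<7, and x = 1, the image of ∂_3 has codimension 1 in ker ∂_2. -/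
set_option maxRecDepth 16000
set_option maxHeartbeats 1000000

open Finsupp

variable (k : Type) [Field k] (X : Type) [PartialOrder X] [Fintype X] [DecidableEq X]

/-- The strict order relation of the 7-element poset `{1,...,7}` (indexed `0,...,6`) with
covering relations `1<2, 1<3, 2<4, 2<5, 2<6, 3<4, 3<5, 3<6, 4<7, 5<7` (its transitive
closure). -/
def rel17 : List (Fin 7 × Fin 7) :=
  [(0,1),(0,2),(0,3),(0,4),(0,5),(0,6),(1,3),(1,4),(1,5),(1,6),
   (2,3),(2,4),(2,5),(2,6),(3,6),(4,6)]

/-- The underlying set of the 7-element poset. -/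
def X17 : Type := Fin 7

instance : DecidableEq X17 := inferInstanceAs (DecidableEq (Fin 7))
instance : Fintype X17 := inferInstanceAs (Fintype (Fin 7))

def le17 (a b : Fin 7) : Bool := a == b || rel17.contains (a, b)

instance : PartialOrder X17 where
  le a b := le17 a b = true
  le_refl a := by
    have h : ∀ a : Fin 7, le17 a a = true := by decide
    exact h a
  le_trans a b c hab hbc := by
    have h : ∀ a b c : Fin 7, le17 a b = true → le17 b c = true → le17 a c = true := by decide
    exact h a b c hab hbc
  le_antisymm a b hab hba := by
    have h : ∀ a b : Fin 7, le17 a b = true → le17 b a = true → a = b := by decide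
    exact h a b hab hba

/-- The element `1` of the poset. -/
def x17 : X17 := (0 : Fin 7)

-- ===== auxiliary development =====
namespace Stmt17Aux

instance : DecidableRel ((· ≤ ·) : X17 → X17 → Prop) :=
  fun a b => inferInstanceAs (Decidable (le17 a b = true))
instance : DecidableRel ((· < ·) : X17 → X17 → Prop) :=
  fun _ _ => decidable_of_iff _ lt_iff_le_not_ge.symm
instance : DecidableRel ((· ⋖ ·) : X17 → X17 → Prop) :=
  fun a b => decidable_of_iff (a < b ∧ ∀ c : X17, a < c → ¬ c < b) Iff.rfl

/-- Elements of the poset, with the right type. -/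
def n (i : Fin 7) : X17 := i

example : x17 ⋖ n 1 := by decide
example : x17 = n 0 := rfl

section
variable (k : Type) [Field k]

noncomputable def ee : Amb k X17 0 →₀ k := Finsupp.single x17 1
noncomputable def pp (i : Fin 7) : Amb k X17 1 := (ee k, n i)
noncomputable def uu : Amb k X17 1 →₀ k :=
  Finsupp.single (pp k 1) 1 - Finsupp.single (pp k 2) 1

lemma pp_ne {i j : Fin 7} (h : n i ≠ n j) : pp k i ≠ pp k j := fun hh => h (congrArg Prod.snd hh)

lemma ee_ne : ee k ≠ 0 := fun h => one_ne_zero (Finsupp.single_eq_zero.1 h)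

lemma uu_apply1 : uu k (pp k 1) = 1 := by
  rw [uu, Finsupp.sub_apply, Finsupp.single_eq_same,
    Finsupp.single_eq_of_ne (pp_ne k (by decide)).symm, sub_zero]

lemma uu_apply_ne {p : Amb k X17 1} (h1 : p ≠ pp k 1) (h2 : p ≠ pp k 2) : uu k p = 0 := by
  rw [uu, Finsupp.sub_apply, Finsupp.single_eq_of_ne' (Ne.symm h1),
    Finsupp.single_eq_of_ne' (Ne.symm h2), sub_zero]

lemma uu_ne : uu k ≠ 0 := by
  intro h
  have := uu_apply1 k
  rw [h] at this
  simp at this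

/-- decomposition of a finsupp supported on a pair -/
lemma pair_decomp {α : Type} {a b : α} (hab : a ≠ b) (f : α →₀ k)
    (h : ∀ x, x ≠ a → x ≠ b → f x = 0) :
    f = f a • Finsupp.single a 1 + f b • Finsupp.single b 1 := by
  classical
  ext q
  by_cases hqa : q = a
  · subst hqa
    simp [Finsupp.single_eq_of_ne' (Ne.symm hab), Finsupp.single_eq_same]
  · by_cases hqb : q = b
    · subst hqb
      simp [Finsupp.single_eq_of_ne' (Ne.symm hqa), Finsupp.single_eq_same]
    · simp [Finsupp.single_eq_of_ne' (Ne.symm hqa), Finsupp.single_eq_of_ne' (Ne.symm hqb),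
        h q hqa hqb]

/-- decomposition of a finsupp supported on a triple -/
lemma triple_decomp {α : Type} {a b c : α} (hab : a ≠ b) (hac : a ≠ c) (hbc : b ≠ c)
    (f : α →₀ k)
    (h : ∀ x, x ≠ a → x ≠ b → x ≠ c → f x = 0) :
    f = f a • Finsupp.single a 1 + f b • Finsupp.single b 1 + f c • Finsupp.single c 1 := by
  ext q
  by_cases hqa : q = a
  · subst hqa
    simp [Finsupp.single_eq_of_ne' (Ne.symm hab), Finsupp.single_eq_of_ne' (Ne.symm hac),
      Finsupp.single_eq_same]
  · by_cases hqb : q = b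
    · subst hqb
      simp [Finsupp.single_eq_of_ne' (Ne.symm hqa), Finsupp.single_eq_of_ne' (Ne.symm hbc),
        Finsupp.single_eq_same]
    · by_cases hqc : q = c
      · subst hqc
        simp [Finsupp.single_eq_of_ne' (Ne.symm hqa), Finsupp.single_eq_of_ne' (Ne.symm hqb),
          Finsupp.single_eq_same]
      · simp [Finsupp.single_eq_of_ne' (Ne.symm hqa), Finsupp.single_eq_of_ne' (Ne.symm hqb),
          Finsupp.single_eq_of_ne' (Ne.symm hqc), h q hqa hqb hqc]

lemma bd_single {i : ℕ} (p : Amb k X17 (i+1)) (c : k) :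
    bd k X17 i (Finsupp.single p c) = c • p.1 := by
  simp [bd]

variable (D : CycleData k X17 x17)

lemma C1_eq : D.C 1 = {pp k 1, pp k 2} := by
  rw [D.hC1]
  ext p
  constructor
  · rintro ⟨y, hy, rfl⟩
    have : y = n 1 ∨ y = n 2 := by revert hy; revert y; decide
    rcases this with h | h <;> subst h
    · exact Or.inl rfl
    · exact Or.inr rfl
  · rintro (rfl | rfl)
    · exact ⟨n 1, by decide, rfl⟩
    · exact ⟨n 2, by decide, rfl⟩

lemma K1_eq :
    LinearMap.ker (bd k X17 0) ⊓ Finsupp.supported k k (D.C 1) =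
      Submodule.span k {uu k} := by
  apply le_antisymm
  · rintro f ⟨hker, hsupp⟩
    rw [C1_eq] at hsupp
    have hsupp' : ∀ x, x ≠ pp k 1 → x ≠ pp k 2 → f x = 0 := by
      intro x h1 h2
      exact (Finsupp.mem_supported' _ _).1 hsupp x (by
        simp only [Set.mem_insert_iff, Set.mem_singleton_iff]; tauto)
    have hdec := pair_decomp k (pp_ne k (show n 1 ≠ n 2 by decide)) f hsupp'
    have hker' : bd k X17 0 f = 0 := hker
    rw [hdec] at hker'
    rw [map_add, map_smul, map_smul, bd_single, bd_single] at hker'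
    have hpp1 : (pp k 1).1 = ee k := rfl
    have hpp2 : (pp k 2).1 = ee k := rfl
    rw [hpp1, hpp2, smul_smul, smul_smul, mul_one, mul_one, ← add_smul] at hker'
    have hsum : f (pp k 1) + f (pp k 2) = 0 := by
      rcases smul_eq_zero.1 hker' with h | h
      · exact h
      · exact absurd h (ee_ne k)
    rw [Submodule.mem_span_singleton]
    set a := f (pp k 1) with ha
    set b := f (pp k 2) with hb
    refine ⟨a, ?_⟩
    rw [hdec, uu, smul_sub, eq_neg_of_add_eq_zero_right hsum, neg_smul, ← sub_eq_add_neg]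
  · rw [Submodule.span_le, Set.singleton_subset_iff]
    refine ⟨?_, ?_⟩
    · show bd k X17 0 (uu k) = 0
      rw [uu, map_sub, bd_single, bd_single, one_smul, one_smul]
      exact sub_self (ee k)
    · rw [C1_eq]
      apply (Finsupp.mem_supported' _ _).2
      intro p hp
      apply uu_apply_ne
      · intro h; exact hp (h ▸ Or.inl rfl)
      · intro h; exact hp (h ▸ Or.inr rfl)

end
end Stmt17Aux

namespace Stmt17Aux
section
variable (k : Type) [Field k]

-- sanity decide facts
example : ∀ z : X17, n 1 < z → n 2 < z := by decide
example : (n 3) ⋖ n 6 := by decide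
example : ∀ z', z' ⋖ n 3 → ¬ n 1 < z' := by decide
example : ∀ z', z' ⋖ n 4 → ¬ n 1 < z' := by decide
example : ∀ z', z' ⋖ n 5 → ¬ n 1 < z' := by decide
example : ∀ z : X17, z ≠ n 6 → ¬ n 3 < z := by decide
example : ∀ z : X17, ¬ n 5 < z := by decide
example : ∀ z : X17, (z = n 3 ∨ z = n 4 ∨ z = n 5) ∨ (z = n 6 ∨ ¬ n 1 < z) := by decide
example : n 3 < n 6 ∧ n 4 < n 6 := by decide

variable (D : CycleData k X17 x17)

lemma Kz0_le (z : X17) : Kz k X17 D.C 0 z ≤ Submodule.span k {uu k} := by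
  rw [Kz, ← K1_eq k D]
  exact inf_le_left

lemma uu_mem_supported {z : X17} (hz1 : n 1 < z) (hz2 : n 2 < z) :
    uu k ∈ Finsupp.supported k k {p : Amb k X17 (0+1) | vtx k X17 (0+1) p < z} := by
  apply (Finsupp.mem_supported' _ _).2
  intro p hp
  apply uu_apply_ne
  · intro h; exact hp (h ▸ hz1)
  · intro h; exact hp (h ▸ hz2)

lemma Kz0_bot {z : X17} (hz : ¬ n 1 < z) : Kz k X17 D.C 0 z = ⊥ := by
  rw [eq_bot_iff]
  rintro f ⟨hf1, hf2⟩
  obtain ⟨c, rfl⟩ := Submodule.mem_span_singleton.1 (Kz0_le k D z ⟨hf1, hf2⟩)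
  have hval : (c • uu k) (pp k 1) = c := by
    rw [Finsupp.smul_apply, uu_apply1, smul_eq_mul, mul_one]
  have h0 : (c • uu k) (pp k 1) = 0 :=
    (Finsupp.mem_supported' _ _).1 hf2 (pp k 1) hz
  rw [hval] at h0
  subst h0
  simp

lemma Kz0_span {z : X17} (hz1 : n 1 < z) : Kz k X17 D.C 0 z = Submodule.span k {uu k} := by
  have hz2 : n 2 < z := (by decide : ∀ z : X17, n 1 < z → n 2 < z) z hz1
  apply le_antisymm (Kz0_le k D z)
  rw [Submodule.span_le, Set.singleton_subset_iff]
  refine ⟨?_, uu_mem_supported k hz1 hz2⟩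
  show uu k ∈ LinearMap.ker (bd k X17 0) ⊓ Finsupp.supported k k (D.C 1)
  rw [K1_eq k D]
  exact Submodule.mem_span_singleton_self _

lemma Kpred0_le (z : X17) : Kpred k X17 D.C 0 z ≤ Submodule.span k {uu k} :=
  iSup₂_le fun z' _ => Kz0_le k D z'

lemma Kpred0_bot {z : X17} (h : ∀ z', z' ⋖ z → ¬ n 1 < z') : Kpred k X17 D.C 0 z = ⊥ :=
  eq_bot_iff.2 (iSup₂_le fun z' hz' => (Kz0_bot k D (h z' hz')).le)

lemma Kpred0_6 : Kpred k X17 D.C 0 (n 6) = Submodule.span k {uu k} := by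
  apply le_antisymm (Kpred0_le k D (n 6))
  rw [← Kz0_span k D (show n 1 < n 3 by decide)]
  exact le_biSup _ (show (n 3) ⋖ n 6 by decide)

lemma spanB0_345 {z : X17} (h1 : n 1 < z) (h2 : ∀ z', z' ⋖ z → ¬ n 1 < z') :
    Submodule.span k (Bset k X17 D.C 0 z) = Submodule.span k {uu k} := by
  have := D.compl 0 z
  rwa [Kpred0_bot k D h2, sup_bot_eq, Kz0_span k D h1] at this

lemma spanB0_bot {z : X17} (h : z = n 6 ∨ ¬ n 1 < z) :
    Submodule.span k (Bset k X17 D.C 0 z) = ⊥ := by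
  rcases h with rfl | h
  · have hc := D.compl 0 (n 6)
    have hd := D.disj 0 (n 6)
    rw [Kpred0_6 k D, Kz0_span k D (show n 1 < n 6 by decide)] at hc
    rw [Kpred0_6 k D] at hd
    have hle : Submodule.span k (Bset k X17 D.C 0 (n 6)) ≤ Submodule.span k {uu k} :=
      le_sup_left.trans hc.le
    rwa [inf_eq_left.2 hle] at hd
  · have hc := D.compl 0 z
    rw [Kz0_bot k D h] at hc
    exact eq_bot_iff.2 (le_sup_left.trans hc.le)

lemma Bset_empty {i : ℕ} {z : X17}
    (h : Submodule.span k (Bset k X17 D.C i z) = ⊥) : Bset k X17 D.C i z = ∅ := by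
  ext w
  simp only [Set.mem_empty_iff_false, iff_false]
  intro hw
  have h0 : w = 0 := by
    have hmem : w ∈ Submodule.span k (Bset k X17 D.C i z) := Submodule.subset_span hw
    rw [h] at hmem
    simpa using hmem
  exact (D.indep i z).ne_zero ⟨w, hw⟩ (by simpa using h0)

/-- generic: a linearly independent set spanning a line is a singleton `{c • u}` -/
lemma span_line_structure {M : Type} [AddCommGroup M] [Module k M] {S : Set M} {u : M}
    (hu : u ≠ 0) (hind : LinearIndependent k (Subtype.val : S → M))
    (hspan : Submodule.span k S = Submodule.span k {u}) :
    ∃ c : k, c ≠ 0 ∧ S = {c • u} := by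
  have hne : S.Nonempty := by
    by_contra h
    rw [Set.not_nonempty_iff_eq_empty] at h
    subst h
    rw [Submodule.span_empty] at hspan
    exact hu (Submodule.mem_bot k |>.1
      (hspan ▸ Submodule.mem_span_singleton_self u))
  obtain ⟨w, hw⟩ := hne
  obtain ⟨c, hc⟩ := Submodule.mem_span_singleton.1
    (hspan ▸ Submodule.subset_span (R := k) hw)
  have hw0 : w ≠ 0 := hind.ne_zero ⟨w, hw⟩
  have hc0 : c ≠ 0 := by rintro rfl; rw [zero_smul] at hc; exact hw0 hc.symm
  refine ⟨c, hc0, ?_⟩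
  ext w'
  simp only [Set.mem_singleton_iff]
  constructor
  · intro hw'
    obtain ⟨c', hc'⟩ := Submodule.mem_span_singleton.1
      (hspan ▸ Submodule.subset_span (R := k) hw')
    have hc'0 : c' ≠ 0 := by
      rintro rfl
      rw [zero_smul] at hc'
      exact hind.ne_zero ⟨w', hw'⟩ hc'.symm
    by_contra hne'
    have hwne : w' ≠ w := by rw [← hc]; exact hne'
    -- build the dependency
    have hl := linearIndepOn_iff.1 (linearIndependent_subtype_iff.1 hind)
      (Finsupp.single w c' - Finsupp.single w' c) ?_ ?_
    · have := DFunLike.congr_fun hl w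
      rw [Finsupp.sub_apply, Finsupp.single_eq_same,
        Finsupp.single_eq_of_ne' hwne, sub_zero] at this
      exact hc'0 this
    · apply (Finsupp.mem_supported' _ _).2
      intro x hx1
      have hxw : x ≠ w := fun h => hx1 (h ▸ hw)
      have hxw' : x ≠ w' := fun h => hx1 (h ▸ hw')
      rw [Finsupp.sub_apply, Finsupp.single_eq_of_ne' (Ne.symm hxw),
        Finsupp.single_eq_of_ne' (Ne.symm hxw'), sub_zero]
    · rw [map_sub, Finsupp.linearCombination_single, Finsupp.linearCombination_single, id, id,
        ← hc, ← hc', smul_smul, smul_smul, mul_comm, sub_self]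
  · rintro rfl
    rw [hc]
    exact hw

end
end Stmt17Aux

namespace Stmt17Aux
section
variable (k : Type) [Field k]

noncomputable def qq (c : k) (i : Fin 7) : Amb k X17 2 := (c • uu k, n i)

lemma qq_ne {c c' : k} {i j : Fin 7} (h : n i ≠ n j) : qq k c i ≠ qq k c' j :=
  fun hh => h (congrArg Prod.snd hh)

noncomputable def gg (c : k) (i : Fin 7) : Amb k X17 2 →₀ k := Finsupp.single (qq k c i) 1

noncomputable def vv (c3 c4 : k) : Amb k X17 2 →₀ k := c4 • gg k c3 3 - c3 • gg k c4 4
noncomputable def ww (c4 c5 : k) : Amb k X17 2 →₀ k := c5 • gg k c4 4 - c4 • gg k c5 5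

lemma bd_gg (c : k) (i : Fin 7) : bd k X17 1 (gg k c i) = c • uu k := by
  rw [gg, bd_single, one_smul]; rfl

variable (D : CycleData k X17 x17)

lemma C2_eq {c3 c4 c5 : k}
    (h3 : Bset k X17 D.C 0 (n 3) = {c3 • uu k})
    (h4 : Bset k X17 D.C 0 (n 4) = {c4 • uu k})
    (h5 : Bset k X17 D.C 0 (n 5) = {c5 • uu k}) :
    D.C 2 = {qq k c3 3, qq k c4 4, qq k c5 5} := by
  ext p
  have hp2 := (by decide :
    ∀ z : X17, (z = n 3 ∨ z = n 4 ∨ z = n 5) ∨ (z = n 6 ∨ ¬ n 1 < z)) p.2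
  simp only [Set.mem_insert_iff, Set.mem_singleton_iff]
  constructor
  · intro hp
    have hp' : p.1 ∈ Bset k X17 D.C 0 p.2 := hp
    rcases hp2 with (h | h | h) | h
    · rw [h, h3] at hp'
      exact Or.inl (Prod.ext hp' h)
    · rw [h, h4] at hp'
      exact Or.inr (Or.inl (Prod.ext hp' h))
    · rw [h, h5] at hp'
      exact Or.inr (Or.inr (Prod.ext hp' h))
    · exfalso
      rw [Bset_empty k D (spanB0_bot k D h)] at hp'
      exact hp'
  · rintro (rfl | rfl | rfl)
    · show (c3 • uu k, n 3).1 ∈ Bset k X17 D.C 0 (n 3)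
      rw [h3]; rfl
    · show (c4 • uu k, n 4).1 ∈ Bset k X17 D.C 0 (n 4)
      rw [h4]; rfl
    · show (c5 • uu k, n 5).1 ∈ Bset k X17 D.C 0 (n 5)
      rw [h5]; rfl

lemma K2_le {c3 c4 c5 : k} (hc4 : c4 ≠ 0)
    (hC2 : D.C 2 = {qq k c3 3, qq k c4 4, qq k c5 5}) :
    LinearMap.ker (bd k X17 1) ⊓ Finsupp.supported k k (D.C 2) ≤
      Submodule.span k {vv k c3 c4, ww k c4 c5} := by
  rintro f ⟨hker, hsupp⟩
  rw [hC2] at hsupp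
  have hsupp' : ∀ x, x ≠ qq k c3 3 → x ≠ qq k c4 4 → x ≠ qq k c5 5 → f x = 0 := by
    intro x h1 h2 h3
    exact (Finsupp.mem_supported' _ _).1 hsupp x (by
      simp only [Set.mem_insert_iff, Set.mem_singleton_iff]; tauto)
  have hdec := triple_decomp k (qq_ne k (by decide)) (qq_ne k (by decide))
    (qq_ne k (by decide)) f hsupp'
  set a := f (qq k c3 3) with ha
  set b := f (qq k c4 4) with hb
  set c := f (qq k c5 5) with hc
  have hker' : bd k X17 1 f = 0 := hker
  rw [hdec, map_add, map_add, map_smul, map_smul, map_smul] at hker'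
  rw [show (Finsupp.single (qq k c3 3) 1 : Amb k X17 2 →₀ k) = gg k c3 3 from rfl,
    show (Finsupp.single (qq k c4 4) 1 : Amb k X17 2 →₀ k) = gg k c4 4 from rfl,
    show (Finsupp.single (qq k c5 5) 1 : Amb k X17 2 →₀ k) = gg k c5 5 from rfl,
    bd_gg, bd_gg, bd_gg, smul_smul, smul_smul, smul_smul, ← add_smul, ← add_smul] at hker'
  have hrel : a * c3 + b * c4 + c * c5 = 0 := by
    rcases smul_eq_zero.1 hker' with h | h
    · exact h
    · exact absurd h (uu_ne k)
  rw [Submodule.mem_span_pair]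
  refine ⟨a * c4⁻¹, -(c * c4⁻¹), ?_⟩
  rw [hdec, vv, ww, gg, gg, gg]
  match_scalars
  · field_simp
  · field_simp
    linear_combination (-1 : k) * hrel
  · field_simp

lemma vv_mem_K2 {c3 c4 c5 : k}
    (hC2 : D.C 2 = {qq k c3 3, qq k c4 4, qq k c5 5}) :
    vv k c3 c4 ∈ LinearMap.ker (bd k X17 1) ⊓ Finsupp.supported k k (D.C 2) := by
  constructor
  · show bd k X17 1 (vv k c3 c4) = 0
    rw [vv, map_sub, map_smul, map_smul, bd_gg, bd_gg, smul_smul, smul_smul,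
      mul_comm c4 c3, sub_self]
  · rw [hC2]
    apply (Finsupp.mem_supported' _ _).2
    intro p hp
    simp only [Set.mem_insert_iff, Set.mem_singleton_iff, not_or] at hp
    rw [vv, Finsupp.sub_apply, Finsupp.smul_apply, Finsupp.smul_apply, gg, gg,
      Finsupp.single_eq_of_ne' (Ne.symm hp.1), Finsupp.single_eq_of_ne' (Ne.symm hp.2.1)]
    simp

lemma ww_mem_K2 {c3 c4 c5 : k}
    (hC2 : D.C 2 = {qq k c3 3, qq k c4 4, qq k c5 5}) :
    ww k c4 c5 ∈ LinearMap.ker (bd k X17 1) ⊓ Finsupp.supported k k (D.C 2) := by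
  constructor
  · show bd k X17 1 (ww k c4 c5) = 0
    rw [ww, map_sub, map_smul, map_smul, bd_gg, bd_gg, smul_smul, smul_smul,
      mul_comm c5 c4, sub_self]
  · rw [hC2]
    apply (Finsupp.mem_supported' _ _).2
    intro p hp
    simp only [Set.mem_insert_iff, Set.mem_singleton_iff, not_or] at hp
    rw [ww, Finsupp.sub_apply, Finsupp.smul_apply, Finsupp.smul_apply, gg, gg,
      Finsupp.single_eq_of_ne' (Ne.symm hp.2.1), Finsupp.single_eq_of_ne' (Ne.symm hp.2.2)]
    simp

lemma K2_eq {c3 c4 c5 : k} (hc4 : c4 ≠ 0)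
    (hC2 : D.C 2 = {qq k c3 3, qq k c4 4, qq k c5 5}) :
    LinearMap.ker (bd k X17 1) ⊓ Finsupp.supported k k (D.C 2) =
      Submodule.span k {vv k c3 c4, ww k c4 c5} := by
  apply le_antisymm (K2_le k D hc4 hC2)
  rw [Submodule.span_le]
  rintro f (rfl | rfl)
  · exact vv_mem_K2 k D hC2
  · exact ww_mem_K2 k D hC2

-- evaluation lemmas
lemma vv_apply3 (c3 c4 : k) : vv k c3 c4 (qq k c3 3) = c4 := by
  rw [vv, Finsupp.sub_apply, Finsupp.smul_apply, Finsupp.smul_apply, gg, gg,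
    Finsupp.single_eq_same, Finsupp.single_eq_of_ne' (qq_ne k (by decide))]
  simp

lemma vv_apply5 (c3 c4 c5 : k) : vv k c3 c4 (qq k c5 5) = 0 := by
  rw [vv, Finsupp.sub_apply, Finsupp.smul_apply, Finsupp.smul_apply, gg, gg,
    Finsupp.single_eq_of_ne' (qq_ne k (by decide)),
    Finsupp.single_eq_of_ne' (qq_ne k (by decide))]
  simp

lemma ww_apply5 (c4 c5 : k) : ww k c4 c5 (qq k c5 5) = -c4 := by
  rw [ww, Finsupp.sub_apply, Finsupp.smul_apply, Finsupp.smul_apply, gg, gg,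
    Finsupp.single_eq_same, Finsupp.single_eq_of_ne' (qq_ne k (by decide))]
  simp

lemma ww_apply3 (c3 c4 c5 : k) : ww k c4 c5 (qq k c3 3) = 0 := by
  rw [ww, Finsupp.sub_apply, Finsupp.smul_apply, Finsupp.smul_apply, gg, gg,
    Finsupp.single_eq_of_ne' (qq_ne k (by decide)),
    Finsupp.single_eq_of_ne' (qq_ne k (by decide))]
  simp

end
end Stmt17Aux

namespace Stmt17Aux
section
variable (k : Type) [Field k]

lemma vv_apply_ne {c3 c4 : k} {p : Amb k X17 2} (h3 : p ≠ qq k c3 3) (h4 : p ≠ qq k c4 4) :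
    vv k c3 c4 p = 0 := by
  rw [vv, Finsupp.sub_apply, Finsupp.smul_apply, Finsupp.smul_apply, gg, gg,
    Finsupp.single_eq_of_ne' (Ne.symm h3), Finsupp.single_eq_of_ne' (Ne.symm h4)]
  simp

lemma ww_apply_ne {c4 c5 : k} {p : Amb k X17 2} (h4 : p ≠ qq k c4 4) (h5 : p ≠ qq k c5 5) :
    ww k c4 c5 p = 0 := by
  rw [ww, Finsupp.sub_apply, Finsupp.smul_apply, Finsupp.smul_apply, gg, gg,
    Finsupp.single_eq_of_ne' (Ne.symm h4), Finsupp.single_eq_of_ne' (Ne.symm h5)]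
  simp

variable (D : CycleData k X17 x17)
variable {c3 c4 c5 : k}

lemma Kz1_le (hc4 : c4 ≠ 0) (hC2 : D.C 2 = {qq k c3 3, qq k c4 4, qq k c5 5}) (z : X17) :
    Kz k X17 D.C 1 z ≤ Submodule.span k {vv k c3 c4, ww k c4 c5} := by
  rintro f ⟨hf1, _⟩
  have h1 : f ∈ LinearMap.ker (bd k X17 1) ⊓ Finsupp.supported k k (D.C 2) := hf1
  rw [K2_eq k D hc4 hC2] at h1
  exact h1

lemma Kz1_bot (hc4 : c4 ≠ 0) (hC2 : D.C 2 = {qq k c3 3, qq k c4 4, qq k c5 5})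
    {z : X17} (hz : z ≠ n 6) : Kz k X17 D.C 1 z = ⊥ := by
  rw [eq_bot_iff]
  rintro f hf
  obtain ⟨hf1, hf2⟩ := hf
  obtain ⟨α, β, hαβ⟩ := Submodule.mem_span_pair.1 (Kz1_le k D hc4 hC2 z ⟨hf1, hf2⟩)
  have h3 : f (qq k c3 3) = 0 := (Finsupp.mem_supported' _ _).1 hf2 _
    ((by decide : ∀ z : X17, z ≠ n 6 → ¬ n 3 < z) z hz)
  have h5 : f (qq k c5 5) = 0 := (Finsupp.mem_supported' _ _).1 hf2 _
    ((by decide : ∀ z : X17, ¬ n 5 < z) z)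
  rw [← hαβ, Finsupp.add_apply, Finsupp.smul_apply, Finsupp.smul_apply,
    vv_apply3, ww_apply3, smul_eq_mul, smul_eq_mul, mul_zero, add_zero] at h3
  rw [← hαβ, Finsupp.add_apply, Finsupp.smul_apply, Finsupp.smul_apply,
    vv_apply5, ww_apply5, smul_eq_mul, smul_eq_mul, mul_zero, zero_add] at h5
  have hα : α = 0 := by
    rcases mul_eq_zero.1 h3 with h | h
    · exact h
    · exact absurd h hc4
  have hβ : β = 0 := by
    have := mul_eq_zero.1 h5
    rcases this with h | h
    · exact h
    · exact absurd (neg_eq_zero.1 h) hc4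
  show f ∈ (⊥ : Submodule k _)
  rw [← hαβ, hα, hβ, zero_smul, zero_smul, add_zero]
  exact Submodule.zero_mem ⊥

lemma vv_mem_supp6 (c3 c4 : k) :
    vv k c3 c4 ∈ Finsupp.supported k k
      {p : Amb k X17 (1+1) | vtx k X17 (1+1) p < n 6} := by
  apply (Finsupp.mem_supported' _ _).2
  intro p hp
  apply vv_apply_ne
  · intro h; exact hp (h ▸ (show n 3 < n 6 by decide))
  · intro h; exact hp (h ▸ (show n 4 < n 6 by decide))

lemma Kz1_6 (hc4 : c4 ≠ 0) (hC2 : D.C 2 = {qq k c3 3, qq k c4 4, qq k c5 5}) :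
    Kz k X17 D.C 1 (n 6) = Submodule.span k {vv k c3 c4} := by
  apply le_antisymm
  · rintro f ⟨hf1, hf2⟩
    obtain ⟨α, β, hαβ⟩ := Submodule.mem_span_pair.1 (Kz1_le k D hc4 hC2 (n 6) ⟨hf1, hf2⟩)
    have h5 : f (qq k c5 5) = 0 := (Finsupp.mem_supported' _ _).1 hf2 _
      ((by decide : ∀ z : X17, ¬ n 5 < z) (n 6))
    rw [← hαβ, Finsupp.add_apply, Finsupp.smul_apply, Finsupp.smul_apply,
      vv_apply5, ww_apply5, smul_eq_mul, smul_eq_mul, mul_zero, zero_add] at h5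
    have hβ : β = 0 := by
      rcases mul_eq_zero.1 h5 with h | h
      · exact h
      · exact absurd (neg_eq_zero.1 h) hc4
    rw [Submodule.mem_span_singleton]
    exact ⟨α, by rw [← hαβ, hβ, zero_smul, add_zero]⟩
  · rw [Submodule.span_le, Set.singleton_subset_iff]
    exact ⟨vv_mem_K2 k D hC2, vv_mem_supp6 k c3 c4⟩

lemma Kpred1_bot (hc4 : c4 ≠ 0) (hC2 : D.C 2 = {qq k c3 3, qq k c4 4, qq k c5 5}) :
    Kpred k X17 D.C 1 (n 6) = ⊥ :=
  eq_bot_iff.2 (iSup₂_le fun z' hz' =>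
    (Kz1_bot k D hc4 hC2 (hz' : z' ⋖ n 6).lt.ne).le)

lemma spanB1_6 (hc4 : c4 ≠ 0) (hC2 : D.C 2 = {qq k c3 3, qq k c4 4, qq k c5 5}) :
    Submodule.span k (Bset k X17 D.C 1 (n 6)) = Submodule.span k {vv k c3 c4} := by
  have := D.compl 1 (n 6)
  rwa [Kpred1_bot k D hc4 hC2, sup_bot_eq, Kz1_6 k D hc4 hC2] at this

lemma spanB1_le (hc4 : c4 ≠ 0) (hC2 : D.C 2 = {qq k c3 3, qq k c4 4, qq k c5 5}) (z : X17) :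
    Submodule.span k (Bset k X17 D.C 1 z) ≤ Submodule.span k {vv k c3 c4} := by
  have hcompl := D.compl 1 z
  have hle : Submodule.span k (Bset k X17 D.C 1 z) ≤ Kz k X17 D.C 1 z :=
    le_sup_left.trans hcompl.le
  by_cases hz : z = n 6
  · subst hz
    rw [Kz1_6 k D hc4 hC2] at hle
    exact hle
  · rw [Kz1_bot k D hc4 hC2 hz] at hle
    exact hle.trans bot_le

lemma image_eq (hc4 : c4 ≠ 0) (hC2 : D.C 2 = {qq k c3 3, qq k c4 4, qq k c5 5}) :
    Submodule.map (bd k X17 2) (Finsupp.supported k k (D.C 3)) =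
      Submodule.span k {vv k c3 c4} := by
  rw [bd, ← Finsupp.span_image_eq_map_linearCombination]
  apply le_antisymm
  · rw [Submodule.span_le]
    rintro w ⟨p, hp, rfl⟩
    have hp' : p.1 ∈ Bset k X17 D.C 1 p.2 := hp
    exact spanB1_le k D hc4 hC2 p.2 (Submodule.subset_span hp')
  · rw [Submodule.span_le, Set.singleton_subset_iff]
    have h1 : vv k c3 c4 ∈ Submodule.span k (Bset k X17 D.C 1 (n 6)) := by
      rw [spanB1_6 k D hc4 hC2]
      exact Submodule.mem_span_singleton_self _
    refine Submodule.span_mono ?_ h1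
    intro w hw
    exact ⟨(⟨w, n 6⟩ : Amb k X17 3), hw, rfl⟩

lemma vv_ne_zero (hc4 : c4 ≠ 0) : vv k c3 c4 ≠ 0 := by
  intro h
  have := vv_apply3 k c3 c4
  rw [h] at this
  exact hc4 (by simpa using this.symm)

lemma finrank_K2 (hc4 : c4 ≠ 0) :
    Module.finrank k (Submodule.span k {vv k c3 c4, ww k c4 c5}) = 2 := by
  have hli : LinearIndependent k ![vv k c3 c4, ww k c4 c5] := by
    rw [linearIndependent_fin2]
    constructor
    · intro h
      have := ww_apply5 k c4 c5
      rw [show ww k c4 c5 = ![vv k c3 c4, ww k c4 c5] 1 from rfl, h] at this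
      exact hc4 (neg_eq_zero.1 (by simpa using this.symm))
    · intro a h
      have h3 := DFunLike.congr_fun h (qq k c3 3)
      rw [Finsupp.smul_apply, show (![vv k c3 c4, ww k c4 c5] 1 : Amb k X17 2 →₀ k) =
        ww k c4 c5 from rfl, show (![vv k c3 c4, ww k c4 c5] 0 : Amb k X17 2 →₀ k) =
        vv k c3 c4 from rfl, ww_apply3, vv_apply3, smul_eq_mul, mul_zero] at h3
      exact hc4 h3.symm
  have := finrank_span_eq_card hli
  rw [Matrix.range_cons, Matrix.range_cons, Matrix.range_empty, Set.union_empty,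
    Set.union_singleton] at this
  rw [show ({vv k c3 c4, ww k c4 c5} : Set (Amb k X17 2 →₀ k)) =
    {ww k c4 c5, vv k c3 c4} from Set.pair_comm _ _]
  rw [this]
  rfl

end
end Stmt17Aux

open Stmt17Aux in
/-- For the above 7-element poset and `x = 1`, the chain complex
`⋯ → kC^2 → kC^1 → kC^0` is not exact: the image of `∂_3` has codimension `1` in
`ker ∂_2` (for any choice of complements/bases in the construction). -/
theorem stmt17 (k : Type) [Field k] (D : CycleData k X17 x17) :
    Module.finrank k
        ↥(LinearMap.ker (bd k X17 1) ⊓ Finsupp.supported k k (D.C 2)) =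
      Module.finrank k
        ↥(Submodule.map (bd k X17 2) (Finsupp.supported k k (D.C 3))) + 1 := by
  obtain ⟨c3, hc3, h3⟩ := span_line_structure k (uu_ne k) (D.indep 0 (n 3))
    (spanB0_345 k D (by decide) (by decide))
  obtain ⟨c4, hc4, h4⟩ := span_line_structure k (uu_ne k) (D.indep 0 (n 4))
    (spanB0_345 k D (by decide) (by decide))
  obtain ⟨c5, hc5, h5⟩ := span_line_structure k (uu_ne k) (D.indep 0 (n 5))
    (spanB0_345 k D (by decide) (by decide))
  have hC2 := C2_eq k D h3 h4 h5
  rw [K2_eq k D hc4 hC2, image_eq k D hc4 hC2, finrank_K2 k hc4,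
    finrank_span_singleton (vv_ne_zero k hc4)]
end
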